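/- arXiv:1812.01746 — 3 statements merged into one kernel-verified Lean document; each statement's English description precedes it below -/
import Mathlib

section
/- Closed form of nonlinear DistFlow voltages. In a radial distribution network, any quadruple (P, Q, ν, ℓ) satisfying the nonlinear DistFlow power-conservation equations together with the voltage-drop equations ν_j = ν_i − 2(R_ij P_ij + X_ij Q_ij) + (R_ij² + X_ij²) ℓ_ij and ν_0 given, satisfies for every node j ∈ N: ν_j = ν̂_j − 2 Σ_{(k,l)∈E} (R̂_jl R_kl + X̂_jl X_kl) ℓ_kl + Σ_{(k,l)∈𝒫_j} (R_kl² + X_kl²) ℓ_kl, where ν̂_j is the LinDistFlow voltage for the same consumptions (pt, qt) and substation voltage ν_0. -/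
open Finset

/-- `b` is the parent of `a` in the child-labelled rooted tree described by `par`
(`par a = none` means that the parent of `a` is the substation node `0`). -/
def IsParent {V : Type*} (par : V → Option V) (a b : V) : Prop := par a = some b

/-- `b` is a weak ancestor of `a` : `b` lies on the path from the substation to `a`
(including `a` itself).  Equivalently `a ∈ T_b`, and the edge entering `b`
belongs to the root-path `𝒫_a`. -/
def Anc {V : Type*} (par : V → Option V) (a b : V) : Prop :=
  Relation.ReflTransGen (IsParent par) a b

/-- Acyclicity of the parent map, so that it describes a genuine (finite, radial) tree. -/
def Acyclic {V : Type*} (par : V → Option V) : Prop :=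
  ∀ v, ¬ Relation.TransGen (IsParent par) v v

open Classical in
/-- Sum of `f` over the subtree `T_j` rooted at `j` (equivalently, identifying each edge
with its child node, over the edges `E_j ∪ {(i,j)}`). -/
noncomputable def subtreeSum {V : Type*} [Fintype V] (par : V → Option V)
    (f : V → ℝ) (j : V) : ℝ :=
  ∑ k, if Anc par k j then f k else 0

open Classical in
/-- Common-path sum `R̂_{jk} = Σ_{e ∈ 𝒫_j ∩ 𝒫_k} R_e`. -/
noncomputable def commonSum {V : Type*} [Fintype V] (par : V → Option V)
    (R : V → ℝ) (j k : V) : ℝ :=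
  ∑ e, if Anc par j e ∧ Anc par k e then R e else 0

open Classical in
/-- Sum of `f` over the edges of the root path `𝒫_j`. -/
noncomputable def pathSum {V : Type*} [Fintype V] (par : V → Option V)
    (f : V → ℝ) (j : V) : ℝ :=
  ∑ e, if Anc par j e then f e else 0

open Classical in
/-- The children of `j`, as a finset. -/
noncomputable def childrenOf {V : Type*} [Fintype V] (par : V → Option V) (j : V) : Finset V :=
  Finset.univ.filter (fun k => par k = some j)

/-- LinDistFlow voltage `ν̂_j`, in closed form. -/
noncomputable def lpfVolt {V : Type*} [Fintype V] (par : V → Option V) (R X : V → ℝ)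
    (pt qt : V → ℝ) (ν0 : ℝ) (j : V) : ℝ :=
  ν0 - 2 * ∑ k, (commonSum par R j k * pt k + commonSum par X j k * qt k)

/-- The LinDistFlow (LPF) equations for flows `P, Q` and squared voltages `ν`,
with substation squared voltage `ν0`. -/
def IsLPF {V : Type*} [Fintype V] (par : V → Option V) (R X : V → ℝ) (pt qt : V → ℝ)
    (ν0 : ℝ) (P Q ν : V → ℝ) : Prop :=
  (∀ j, P j = (∑ k ∈ childrenOf par j, P k) + pt j) ∧
  (∀ j, Q j = (∑ k ∈ childrenOf par j, Q k) + qt j) ∧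
  (∀ j, ν j = (par j).elim ν0 ν - 2 * (R j * P j + X j * Q j))

/-!
The flows are subtree sums: `P_j = Σ_{k ∈ T_j} (pt_k + R_k ℓ_k)`, by induction from the leaves.
Summing the voltage drops along the root path then gives
`ν_j = ν_0 + Σ_{e ∈ 𝒫_j} (−2 (R_e P_e + X_e Q_e) + (R_e² + X_e²) ℓ_e)`, and exchanging the order of
summation turns `Σ_{e ∈ 𝒫_j} R_e Σ_{k ∈ T_e} f_k` into `Σ_k R̂_{jk} f_k`, because
`e ∈ 𝒫_j` and `k ∈ T_e` together say `e ∈ 𝒫_j ∩ 𝒫_k`.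
-/

theorem Relation.wellFounded_of_forall_not_transGen_self {α : Type*} [Finite α]
    {r : α → α → Prop} (h : ∀ a, ¬ Relation.TransGen r a a) : WellFounded r :=
  have : Std.Irrefl (Relation.TransGen r) := ⟨h⟩
  Subrelation.wf Relation.TransGen.single (Finite.wellFounded_of_trans_of_irrefl _)

section Tree

variable {V : Type*} {par : V → Option V}

theorem Acyclic.wellFounded [Finite V] (hacyc : Acyclic par) : WellFounded (IsParent par) :=
  Relation.wellFounded_of_forall_not_transGen_self hacyc

theorem Acyclic.wellFounded_swap [Finite V] (hacyc : Acyclic par) :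
    WellFounded (Function.swap (IsParent par)) :=
  Relation.wellFounded_of_forall_not_transGen_self fun v h =>
    hacyc v (Relation.transGen_swap.mp h)

theorem Acyclic.not_anc_of_parent_eq (hacyc : Acyclic par) {i j : V} (h : par j = some i) :
    ¬ Anc par i j :=
  fun h' => hacyc j (Relation.TransGen.head' h h')

theorem anc_iff_of_parent_eq_none {j e : V} (h : par j = none) : Anc par j e ↔ e = j := by
  rw [Anc, Relation.ReflTransGen.cases_head_iff]
  simp [IsParent, h, eq_comm]

theorem anc_iff_of_parent_eq_some {i j e : V} (h : par j = some i) :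
    Anc par j e ↔ e = j ∨ Anc par i e := by
  rw [Anc, Relation.ReflTransGen.cases_head_iff]
  simp [IsParent, h, eq_comm, Anc]

theorem anc_total {k a b : V} (ha : Anc par k a) (hb : Anc par k b) :
    Anc par a b ∨ Anc par b a := by
  induction ha using Relation.ReflTransGen.head_induction_on generalizing b with
  | refl => exact .inl hb
  | head hkc hca ih =>
    rcases hb.cases_head with rfl | ⟨d, hkd, hdb⟩
    · exact .inr (.head hkc hca)
    · cases (Option.some_injective _ (hkc.symm.trans hkd))
      exact ih hdb

theorem Acyclic.eq_of_anc_of_parent_eq (hacyc : Acyclic par) {j c c' k : V}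
    (hc : par c = some j) (hc' : par c' = some j) (hk : Anc par k c) (hk' : Anc par k c') :
    c = c' := by
  rcases anc_total hk hk' with h | h
  · rcases (anc_iff_of_parent_eq_some hc).mp h with rfl | hj
    exacts [rfl, absurd hj (hacyc.not_anc_of_parent_eq hc')]
  · rcases (anc_iff_of_parent_eq_some hc').mp h with rfl | hj
    exacts [rfl, absurd hj (hacyc.not_anc_of_parent_eq hc)]

variable [Fintype V]

theorem anc_iff_eq_or_exists_mem_childrenOf {k j : V} :
    Anc par k j ↔ k = j ∨ ∃ c ∈ childrenOf par j, Anc par k c := by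
  rw [Anc, Relation.ReflTransGen.cases_tail_iff]
  simp [childrenOf, IsParent, Anc, eq_comm, and_comm]

open Classical in
theorem filter_anc_eq_insert_biUnion (j : V) :
    univ.filter (Anc par · j) =
      insert j ((childrenOf par j).biUnion fun c => univ.filter (Anc par · c)) := by
  ext k
  simp [anc_iff_eq_or_exists_mem_childrenOf (k := k) (j := j)]

open Classical in
theorem Acyclic.subtreeSum_eq (hacyc : Acyclic par) (g : V → ℝ) (j : V) :
    subtreeSum par g j = g j + ∑ c ∈ childrenOf par j, subtreeSum par g c := by
  simp only [subtreeSum, ← sum_filter]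
  rw [filter_anc_eq_insert_biUnion, sum_insert, sum_biUnion]
  · intro c hc c' hc' hne
    simp only [childrenOf, coe_filter, mem_univ, true_and] at hc hc'
    exact disjoint_filter.mpr fun k _ hk hk' => hne (hacyc.eq_of_anc_of_parent_eq hc hc' hk hk')
  · simp only [mem_biUnion, mem_filter, childrenOf, mem_univ, true_and, not_exists, not_and]
    exact fun c hc hjc => hacyc.not_anc_of_parent_eq hc hjc

open Classical in
theorem Acyclic.pathSum_eq (hacyc : Acyclic par) (f : V → ℝ) (j : V) :
    pathSum par f j = f j + (par j).elim 0 (pathSum par f) := by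
  simp only [pathSum, ← sum_filter]
  rcases hj : par j with _ | i
  · have : univ.filter (Anc par j) = {j} := by
      ext e; simp [anc_iff_of_parent_eq_none hj]
    simp [this]
  · have : univ.filter (Anc par j) = insert j (univ.filter (Anc par i)) := by
      ext e; simp [anc_iff_of_parent_eq_some hj]
    rw [this, sum_insert (by simpa using hacyc.not_anc_of_parent_eq hj)]
    simp [pathSum, sum_filter]

theorem Acyclic.eq_subtreeSum_of_forall_eq_sum_add (hacyc : Acyclic par) {P g : V → ℝ}
    (hP : ∀ j, P j = ∑ k ∈ childrenOf par j, P k + g j) (j : V) :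
    P j = subtreeSum par g j := by
  induction j using hacyc.wellFounded.induction with
  | _ j ih =>
    rw [hP j, hacyc.subtreeSum_eq, add_comm]
    congr 1
    refine sum_congr rfl fun c hc => ih c ?_
    simpa [childrenOf, IsParent] using hc

theorem Acyclic.eq_add_pathSum_of_forall_eq_elim_add (hacyc : Acyclic par) {ν d : V → ℝ}
    {ν0 : ℝ} (hν : ∀ j, ν j = (par j).elim ν0 ν + d j) (j : V) :
    ν j = ν0 + pathSum par d j := by
  induction j using hacyc.wellFounded_swap.induction with
  | _ j ih =>
    rw [hν j, hacyc.pathSum_eq]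
    rcases hj : par j with _ | i
    · simp
    · simp only [Option.elim, ih i hj]; ring

theorem pathSum_mul_subtreeSum (R f : V → ℝ) (j : V) :
    pathSum par (fun e => R e * subtreeSum par f e) j = ∑ k, commonSum par R j k * f k := by
  simp only [pathSum, subtreeSum, commonSum, mul_sum, sum_mul]
  rw [sum_comm]
  refine sum_congr rfl fun e _ => ?_
  split_ifs with hje
  · exact sum_congr rfl fun k _ => by split_ifs <;> simp_all
  · simp [hje]

theorem pathSum_add (f g : V → ℝ) (j : V) :
    pathSum par (fun e => f e + g e) j = pathSum par f j + pathSum par g j := by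
  simp only [pathSum, ← sum_add_distrib]
  exact sum_congr rfl fun e _ => by split_ifs <;> simp

theorem pathSum_const_mul (c : ℝ) (f : V → ℝ) (j : V) :
    pathSum par (fun e => c * f e) j = c * pathSum par f j := by
  simp only [pathSum, mul_sum, mul_ite, mul_zero]

end Tree

theorem npf_voltage_closed_form_general {V : Type*} [Fintype V] (par : V → Option V)
    (hacyc : Acyclic par) (R X : V → ℝ)
    (pt qt : V → ℝ) (ν0 : ℝ) (P Q ν ℓ : V → ℝ)
    (hP : ∀ j, P j = (∑ k ∈ childrenOf par j, P k) + pt j + R j * ℓ j)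
    (hQ : ∀ j, Q j = (∑ k ∈ childrenOf par j, Q k) + qt j + X j * ℓ j)
    (hV : ∀ j, ν j = (par j).elim ν0 ν - 2 * (R j * P j + X j * Q j)
        + (R j ^ 2 + X j ^ 2) * ℓ j) :
    ∀ j, ν j = lpfVolt par R X pt qt ν0 j
        - 2 * (∑ e, (commonSum par R j e * R e + commonSum par X j e * X e) * ℓ e)
        + pathSum par (fun e => (R e ^ 2 + X e ^ 2) * ℓ e) j := by
  intro j
  have hPs : P = subtreeSum par (fun k => pt k + R k * ℓ k) :=
    funext (hacyc.eq_subtreeSum_of_forall_eq_sum_add fun j => by rw [hP j, add_assoc])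
  have hQs : Q = subtreeSum par (fun k => qt k + X k * ℓ k) :=
    funext (hacyc.eq_subtreeSum_of_forall_eq_sum_add fun j => by rw [hQ j, add_assoc])
  have hνs : ν j = ν0 + pathSum par (fun e => -2 * (R e * P e + X e * Q e)
      + (R e ^ 2 + X e ^ 2) * ℓ e) j :=
    hacyc.eq_add_pathSum_of_forall_eq_elim_add (fun j => by rw [hV j]; ring) j
  have hRPXQ : pathSum par (fun e => R e * P e) j + pathSum par (fun e => X e * Q e) j
      = ∑ k, (commonSum par R j k * pt k + commonSum par X j k * qt k)
        + ∑ e, (commonSum par R j e * R e + commonSum par X j e * X e) * ℓ e := by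
    rw [hPs, hQs, pathSum_mul_subtreeSum, pathSum_mul_subtreeSum, ← sum_add_distrib,
      ← sum_add_distrib]
    exact sum_congr rfl fun k _ => by ring
  rw [hνs, pathSum_add (fun e => -2 * _), pathSum_const_mul,
    pathSum_add (fun e => R e * P e), lpfVolt]
  linarith

/-- **Closed form of nonlinear DistFlow voltages.**
Any `(P, Q, ν, ℓ)` satisfying the nonlinear DistFlow power-conservation equations and the
voltage-drop equations `ν_j = ν_i − 2(R_ij P_ij + X_ij Q_ij) + (R_ij² + X_ij²) ℓ_ij`
(with `ν_0` given) satisfies, for every node `j ∈ N`: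
`ν_j = ν̂_j − 2 Σ_{(k,l)∈E} (R̂_jl R_kl + X̂_jl X_kl) ℓ_kl + Σ_{(k,l)∈𝒫_j} (R_kl² + X_kl²) ℓ_kl`,
where `ν̂_j` is the LinDistFlow voltage for the same consumptions and substation voltage. -/
theorem npf_voltage_closed_form {V : Type*} [Fintype V] (par : V → Option V)
    (hacyc : Acyclic par) (R X : V → ℝ)
    (hR : ∀ e, 0 < R e) (hX : ∀ e, 0 < X e)
    (pt qt : V → ℝ) (ν0 : ℝ) (P Q ν ℓ : V → ℝ)
    (hP : ∀ j, P j = (∑ k ∈ childrenOf par j, P k) + pt j + R j * ℓ j)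
    (hQ : ∀ j, Q j = (∑ k ∈ childrenOf par j, Q k) + qt j + X j * ℓ j)
    (hV : ∀ j, ν j = (par j).elim ν0 ν - 2 * (R j * P j + X j * Q j)
        + (R j ^ 2 + X j ^ 2) * ℓ j) :
    ∀ j, ν j = lpfVolt par R X pt qt ν0 j
        - 2 * (∑ e, (commonSum par R j e * R e + commonSum par X j e * X e) * ℓ e)
        + pathSum par (fun e => (R e ^ 2 + X e ^ 2) * ℓ e) j :=
  npf_voltage_closed_form_general par hacyc R X pt qt ν0 P Q ν ℓ hP hQ hV
end

section
/- Monotonicity of DistFlow quantities in the line currents. Fix consumptions (pt, qt) and substation voltage ν_0 and regard (P, Q, ν) as functions of the vector ℓ = (ℓ_kl)_{(k,l)∈E} via the closed-form identities P_ij(ℓ) = P̂_ij + Σ_{(k,l)∈E_j∪{(i,j)}} R_kl ℓ_kl, Q_ij(ℓ) = Q̂_ij + Σ_{(k,l)∈E_j∪{(i,j)}} X_kl ℓ_kl, and ν_j(ℓ) = ν̂_j − 2Σ_{(k,l)∈E}(R̂_jl R_kl + X̂_jl X_kl) ℓ_kl + Σ_{(k,l)∈𝒫_j}(R_kl² + X_kl²)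 ℓ_kl. Then: (i) ∂P_ij/∂ℓ_kl = R_kl · 1{(k,l) ∈ E_j ∪ {(i,j)}} ≥ 0 and ∂Q_ij/∂ℓ_kl = X_kl · 1{(k,l) ∈ E_j ∪ {(i,j)}} ≥ 0; (ii) ∂ν_j/∂ℓ_kl = −2(R̂_jl R_kl + X̂_jl X_kl) + (R_kl² + X_kl²)·1{(k,l)∈𝒫_j} ≤ 0, and moreover ∂ν_j/∂ℓ_kl ≤ −(R_kl² + X_kl²) < 0 whenever (k,l) ∈ 𝒫_j. Consequently, if ℓ' ≥ ℓ componentwise then P(ℓ') ≥ P(ℓ), Q(ℓ') ≥ Q(ℓ), and ν(ℓ') ≤ ν(ℓ), with ν_j(ℓ') < ν_j(ℓ) whenever ℓ'_kl > ℓ_kl for some (k,l) ∈ 𝒫_j. -/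
open Finset

/-- Nonlinear DistFlow line flow, as a function of the vector `ℓ` of squared line
currents (closed-form identity): `P_ij(ℓ) = P̂_ij + Σ_{(k,l)∈E_j∪{(i,j)}} R_kl ℓ_kl`.
(The reactive flow `Q_ij(ℓ)` is obtained by instantiating `R := X`, `pt := qt`.) -/
noncomputable def npfFlowCur {V : Type*} [Fintype V] (par : V → Option V)
    (R pt : V → ℝ) (ℓ : V → ℝ) (j : V) : ℝ :=
  subtreeSum par pt j + subtreeSum par (fun e => R e * ℓ e) j

/-- Nonlinear DistFlow squared voltage, as a function of the vector `ℓ` of squared line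
currents (closed-form identity):
`ν_j(ℓ) = ν̂_j − 2Σ_{(k,l)∈E}(R̂_jl R_kl + X̂_jl X_kl) ℓ_kl + Σ_{(k,l)∈𝒫_j}(R_kl²+X_kl²) ℓ_kl`. -/
noncomputable def npfVoltCur {V : Type*} [Fintype V] (par : V → Option V)
    (R X pt qt : V → ℝ) (ν0 : ℝ) (ℓ : V → ℝ) (j : V) : ℝ :=
  lpfVolt par R X pt qt ν0 j
    - 2 * (∑ e, (commonSum par R j e * R e + commonSum par X j e * X e) * ℓ e)
    + pathSum par (fun e => (R e ^ 2 + X e ^ 2) * ℓ e) j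


/-!
Each of `P`, `Q`, `ν` is affine in the current vector `ℓ`, so its partial derivative in
`ℓ_e` is the coefficient of `ℓ_e`, and monotonicity is the sign of that coefficient. For
the flows it is `R_e ≥ 0` or `0`. For the voltage, if `e ∈ 𝒫_j` then `e ∈ 𝒫_j ∩ 𝒫_e`, so
`R̂_je ≥ R_e` and `X̂_je ≥ X_e`, whence
`-2(R̂_je R_e + X̂_je X_e) + (R_e² + X_e²) ≤ -(R_e² + X_e²)`; otherwise the coefficient is
`-2(R̂_je R_e + X̂_je X_e) ≤ 0`.
-/

section Affine

variable {ι : Type*} [Fintype ι]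

theorem fderiv_const_add_dotProduct_single [DecidableEq ι] (a : ℝ) (c ℓ : ι → ℝ) (e : ι) :
    fderiv ℝ (fun l => a + c ⬝ᵥ l) ℓ (Pi.single e 1) = c e := by
  let L : (ι → ℝ) →L[ℝ] ℝ := LinearMap.toContinuousLinearMap (dotProductBilin ℝ ℝ c)
  have hL : HasFDerivAt (fun l => a + c ⬝ᵥ l) L ℓ := L.hasFDerivAt.const_add a
  rw [hL.fderiv]
  simp [L, dotProduct_single]

theorem dotProduct_lt_dotProduct_of_nonneg_left {u v w : ι → ℝ} (huv : u ≤ v) (hw : 0 ≤ w)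
    {e : ι} (hwe : 0 < w e) (huve : u e < v e) : w ⬝ᵥ u < w ⬝ᵥ v :=
  Finset.sum_lt_sum (fun k _ => mul_le_mul_of_nonneg_left (huv k) (hw k))
    ⟨e, Finset.mem_univ e, mul_lt_mul_of_pos_left huve hwe⟩

end Affine

section DistFlow

variable {V : Type*} {par : V → Option V} {R X : V → ℝ}

open Classical in
noncomputable def npfFlowCoeff (par : V → Option V) (R : V → ℝ) (j e : V) : ℝ :=
  if Anc par e j then R e else 0

theorem npfFlowCoeff_nonneg (hR : ∀ e, 0 ≤ R e) (j : V) : 0 ≤ npfFlowCoeff par R j :=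
  fun e => by unfold npfFlowCoeff; split_ifs; exacts [hR e, le_rfl]

variable [Fintype V]

open Classical in
noncomputable def npfVoltCoeff (par : V → Option V) (R X : V → ℝ) (j e : V) : ℝ :=
  -2 * (commonSum par R j e * R e + commonSum par X j e * X e)
    + if Anc par j e then R e ^ 2 + X e ^ 2 else 0

theorem npfFlowCur_eq (pt ℓ : V → ℝ) (j : V) :
    npfFlowCur par R pt ℓ j = subtreeSum par pt j + npfFlowCoeff par R j ⬝ᵥ ℓ := by
  unfold npfFlowCur subtreeSum dotProduct npfFlowCoeff
  congr 1
  exact Finset.sum_congr rfl fun k _ => by split_ifs <;> simp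

theorem npfVoltCur_eq (pt qt : V → ℝ) (ν0 : ℝ) (ℓ : V → ℝ) (j : V) :
    npfVoltCur par R X pt qt ν0 ℓ j
      = lpfVolt par R X pt qt ν0 j + npfVoltCoeff par R X j ⬝ᵥ ℓ := by
  unfold npfVoltCur pathSum dotProduct npfVoltCoeff
  rw [Finset.mul_sum, sub_add_eq_add_sub, add_sub_assoc, ← Finset.sum_sub_distrib]
  congr 1
  exact Finset.sum_congr rfl fun e _ => by split_ifs <;> ring

theorem commonSum_nonneg (hR : ∀ e, 0 ≤ R e) (j k : V) : 0 ≤ commonSum par R j k :=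
  Finset.sum_nonneg fun e _ => by split_ifs; exacts [hR e, le_rfl]

theorem le_commonSum (hR : ∀ e, 0 ≤ R e) {j e : V} (h : Anc par j e) :
    R e ≤ commonSum par R j e := by
  classical
  have := Finset.single_le_sum (f := fun k => if Anc par j k ∧ Anc par e k then R k else 0)
    (fun k _ => by split_ifs; exacts [hR k, le_rfl]) (Finset.mem_univ e)
  rwa [if_pos ⟨h, Relation.ReflTransGen.refl⟩] at this

theorem npfVoltCoeff_le_of_anc (hR : ∀ e, 0 ≤ R e) (hX : ∀ e, 0 ≤ X e) {j e : V}
    (h : Anc par j e) : npfVoltCoeff par R X j e ≤ -(R e ^ 2 + X e ^ 2) := by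
  have hRj := le_commonSum hR h
  have hXj := le_commonSum hX h
  simp only [npfVoltCoeff, if_pos h]
  nlinarith [hR e, hX e]

theorem npfVoltCoeff_nonpos (hR : ∀ e, 0 ≤ R e) (hX : ∀ e, 0 ≤ X e) (j : V) :
    npfVoltCoeff par R X j ≤ 0 := by
  intro e
  by_cases h : Anc par j e
  · exact (npfVoltCoeff_le_of_anc hR hX h).trans (neg_nonpos.2 (by positivity))
  · have hRj := commonSum_nonneg (par := par) hR j e
    have hXj := commonSum_nonneg (par := par) hX j e
    simp only [npfVoltCoeff, if_neg h, Pi.zero_apply]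
    nlinarith [hR e, hX e]

theorem npfVoltCoeff_neg_of_anc (hR : ∀ e, 0 ≤ R e) (hX : ∀ e, 0 ≤ X e) {j e : V}
    (hRe : 0 < R e) (h : Anc par j e) : npfVoltCoeff par R X j e < 0 :=
  (npfVoltCoeff_le_of_anc hR hX h).trans_lt (by nlinarith [sq_nonneg (X e)])

theorem npfFlowCur_mono (hR : ∀ e, 0 ≤ R e) (pt : V → ℝ) (j : V) :
    Monotone fun ℓ => npfFlowCur par R pt ℓ j := fun ℓ ℓ' hle => by
  simp only [npfFlowCur_eq]
  exact add_le_add_right (dotProduct_le_dotProduct_of_nonneg_left hle (npfFlowCoeff_nonneg hR j)) _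

theorem npfVoltCur_anti (hR : ∀ e, 0 ≤ R e) (hX : ∀ e, 0 ≤ X e) (pt qt : V → ℝ) (ν0 : ℝ)
    (j : V) : Antitone fun ℓ => npfVoltCur par R X pt qt ν0 ℓ j := fun ℓ ℓ' hle => by
  have := dotProduct_le_dotProduct_of_nonneg_left hle
    (neg_nonneg.2 (npfVoltCoeff_nonpos (par := par) hR hX j))
  simp only [npfVoltCur_eq, neg_dotProduct] at this ⊢
  linarith

theorem npfVoltCur_lt_of_anc (hR : ∀ e, 0 ≤ R e) (hX : ∀ e, 0 ≤ X e) (pt qt : V → ℝ)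
    (ν0 : ℝ) {ℓ ℓ' : V → ℝ} (hle : ℓ ≤ ℓ') {j e : V} (hRe : 0 < R e) (h : Anc par j e)
    (hlt : ℓ e < ℓ' e) : npfVoltCur par R X pt qt ν0 ℓ' j < npfVoltCur par R X pt qt ν0 ℓ j := by
  have := dotProduct_lt_dotProduct_of_nonneg_left hle
    (neg_nonneg.2 (npfVoltCoeff_nonpos (par := par) hR hX j))
    (neg_pos.2 (npfVoltCoeff_neg_of_anc hR hX hRe h)) hlt
  simp only [npfVoltCur_eq, neg_dotProduct] at this ⊢
  linarith

end DistFlow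

open Classical in
theorem distflow_monotone_in_currents_general {V : Type*} [Fintype V] [DecidableEq V]
    (par : V → Option V)
    (R X : V → ℝ) (hR : ∀ e, 0 < R e) (hX : ∀ e, 0 < X e)
    (pt qt : V → ℝ) (ν0 : ℝ) :
    -- (i) sensitivity of the flows
    (∀ (ℓ : V → ℝ) (j e : V),
      (fderiv ℝ (fun l => npfFlowCur par R pt l j) ℓ) (Pi.single e 1)
          = (if Anc par e j then R e else 0) ∧
      0 ≤ (fderiv ℝ (fun l => npfFlowCur par R pt l j) ℓ) (Pi.single e 1) ∧
      (fderiv ℝ (fun l => npfFlowCur par X qt l j) ℓ) (Pi.single e 1)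
          = (if Anc par e j then X e else 0) ∧
      0 ≤ (fderiv ℝ (fun l => npfFlowCur par X qt l j) ℓ) (Pi.single e 1)) ∧
    -- (ii) sensitivity of the voltages
    (∀ (ℓ : V → ℝ) (j e : V),
      (fderiv ℝ (fun l => npfVoltCur par R X pt qt ν0 l j) ℓ) (Pi.single e 1)
          = -2 * (commonSum par R j e * R e + commonSum par X j e * X e)
              + (if Anc par j e then R e ^ 2 + X e ^ 2 else 0) ∧
      (fderiv ℝ (fun l => npfVoltCur par R X pt qt ν0 l j) ℓ) (Pi.single e 1) ≤ 0 ∧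
      (Anc par j e →
        (fderiv ℝ (fun l => npfVoltCur par R X pt qt ν0 l j) ℓ) (Pi.single e 1)
            ≤ -(R e ^ 2 + X e ^ 2) ∧
        (fderiv ℝ (fun l => npfVoltCur par R X pt qt ν0 l j) ℓ) (Pi.single e 1) < 0)) ∧
    -- (iii) componentwise monotonicity
    (∀ ℓ ℓ' : V → ℝ, ℓ ≤ ℓ' →
      (∀ j, npfFlowCur par R pt ℓ j ≤ npfFlowCur par R pt ℓ' j) ∧
      (∀ j, npfFlowCur par X qt ℓ j ≤ npfFlowCur par X qt ℓ' j) ∧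
      (∀ j, npfVoltCur par R X pt qt ν0 ℓ' j ≤ npfVoltCur par R X pt qt ν0 ℓ j) ∧
      (∀ j, (∃ e, Anc par j e ∧ ℓ e < ℓ' e) →
        npfVoltCur par R X pt qt ν0 ℓ' j < npfVoltCur par R X pt qt ν0 ℓ j)) := by
  have hR0 : ∀ e, 0 ≤ R e := fun e => (hR e).le
  have hX0 : ∀ e, 0 ≤ X e := fun e => (hX e).le
  refine ⟨fun ℓ j e => ?_, fun ℓ j e => ?_, fun ℓ ℓ' hle => ?_⟩
  · simp only [npfFlowCur_eq, fderiv_const_add_dotProduct_single]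
    exact ⟨rfl, npfFlowCoeff_nonneg hR0 j e, rfl, npfFlowCoeff_nonneg hX0 j e⟩
  · simp only [npfVoltCur_eq, fderiv_const_add_dotProduct_single]
    exact ⟨rfl, npfVoltCoeff_nonpos hR0 hX0 j e,
      fun h => ⟨npfVoltCoeff_le_of_anc hR0 hX0 h, npfVoltCoeff_neg_of_anc hR0 hX0 (hR e) h⟩⟩
  · exact ⟨fun j => npfFlowCur_mono hR0 pt j hle, fun j => npfFlowCur_mono hX0 qt j hle,
      fun j => npfVoltCur_anti hR0 hX0 pt qt ν0 j hle,
      fun j ⟨e, he, hlt⟩ => npfVoltCur_lt_of_anc hR0 hX0 pt qt ν0 hle (hR e) he hlt⟩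

open Classical in
/-- **Monotonicity of DistFlow quantities in the line currents.**
Fix consumptions `(pt, qt)` and substation voltage `ν0`, and regard `(P, Q, ν)` as
functions of the current vector `ℓ` via the closed-form identities.  Then:
(i) `∂P_ij/∂ℓ_kl = R_kl·1{(k,l)∈E_j∪{(i,j)}} ≥ 0` and
`∂Q_ij/∂ℓ_kl = X_kl·1{(k,l)∈E_j∪{(i,j)}} ≥ 0`;
(ii) `∂ν_j/∂ℓ_kl = −2(R̂_jl R_kl + X̂_jl X_kl) + (R_kl²+X_kl²)·1{(k,l)∈𝒫_j} ≤ 0`,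
and `∂ν_j/∂ℓ_kl ≤ −(R_kl²+X_kl²) < 0` whenever `(k,l) ∈ 𝒫_j`;
(iii) if `ℓ ≤ ℓ'` componentwise then `P(ℓ) ≤ P(ℓ')`, `Q(ℓ) ≤ Q(ℓ')`, `ν(ℓ') ≤ ν(ℓ)`,
with `ν_j(ℓ') < ν_j(ℓ)` whenever `ℓ_kl < ℓ'_kl` for some `(k,l) ∈ 𝒫_j`. -/
theorem distflow_monotone_in_currents {V : Type*} [Fintype V] [DecidableEq V]
    (par : V → Option V) (hacyc : Acyclic par)
    (R X : V → ℝ) (hR : ∀ e, 0 < R e) (hX : ∀ e, 0 < X e)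
    (pt qt : V → ℝ) (ν0 : ℝ) :
    -- (i) sensitivity of the flows
    (∀ (ℓ : V → ℝ) (j e : V),
      (fderiv ℝ (fun l => npfFlowCur par R pt l j) ℓ) (Pi.single e 1)
          = (if Anc par e j then R e else 0) ∧
      0 ≤ (fderiv ℝ (fun l => npfFlowCur par R pt l j) ℓ) (Pi.single e 1) ∧
      (fderiv ℝ (fun l => npfFlowCur par X qt l j) ℓ) (Pi.single e 1)
          = (if Anc par e j then X e else 0) ∧
      0 ≤ (fderiv ℝ (fun l => npfFlowCur par X qt l j) ℓ) (Pi.single e 1)) ∧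
    -- (ii) sensitivity of the voltages
    (∀ (ℓ : V → ℝ) (j e : V),
      (fderiv ℝ (fun l => npfVoltCur par R X pt qt ν0 l j) ℓ) (Pi.single e 1)
          = -2 * (commonSum par R j e * R e + commonSum par X j e * X e)
              + (if Anc par j e then R e ^ 2 + X e ^ 2 else 0) ∧
      (fderiv ℝ (fun l => npfVoltCur par R X pt qt ν0 l j) ℓ) (Pi.single e 1) ≤ 0 ∧
      (Anc par j e →
        (fderiv ℝ (fun l => npfVoltCur par R X pt qt ν0 l j) ℓ) (Pi.single e 1)
            ≤ -(R e ^ 2 + X e ^ 2) ∧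
        (fderiv ℝ (fun l => npfVoltCur par R X pt qt ν0 l j) ℓ) (Pi.single e 1) < 0)) ∧
    -- (iii) componentwise monotonicity
    (∀ ℓ ℓ' : V → ℝ, ℓ ≤ ℓ' →
      (∀ j, npfFlowCur par R pt ℓ j ≤ npfFlowCur par R pt ℓ' j) ∧
      (∀ j, npfFlowCur par X qt ℓ j ≤ npfFlowCur par X qt ℓ' j) ∧
      (∀ j, npfVoltCur par R X pt qt ν0 ℓ' j ≤ npfVoltCur par R X pt qt ν0 ℓ j) ∧
      (∀ j, (∃ e, Anc par j e ∧ ℓ e < ℓ' e) →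
        npfVoltCur par R X pt qt ν0 ℓ' j < npfVoltCur par R X pt qt ν0 ℓ j)) :=
  distflow_monotone_in_currents_general par R X hR hX pt qt ν0
end

section
/- LinDistFlow underestimates line flows and overestimates nodal voltages. Let (P, Q, ν, ℓ) be any solution of the nonlinear DistFlow equations (power conservation with loss terms and voltage-drop equations) with ℓ_kl ≥ 0 for every edge, and let (P̂, Q̂, ν̂) be the LinDistFlow solution for the same consumptions (pt, qt) and the same substation voltage ν_0. Then P_ij ≥ P̂_ij and Q_ij ≥ Q̂_ij for every edge (i,j) ∈ E, and ν_j ≤ ν̂_j for every node j ∈ N; moreover ν_j < ν̂_j whenever ℓ_kl > 0 for some edge (k,l) ∈ 𝒫_j. -/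
/-!
With `ΔP = P - P̂`, subtracting the LinDistFlow equations from the DistFlow ones gives
`ΔP_j = Σ_{children k} ΔP_k + R_j ℓ_j`, so induction from the leaves upwards yields
`ΔP_j ≥ R_j ℓ_j ≥ 0`, and likewise `ΔQ_j ≥ X_j ℓ_j`. Feeding this into the voltage-drop
equations, the gap `Δν = ν̂ - ν` satisfies
`Δν_j = Δν_parent + 2 (R_j ΔP_j + X_j ΔQ_j) - (R_j² + X_j²) ℓ_j ≥ Δν_parent + (R_j² + X_j²) ℓ_j`
with `Δν = 0` at the substation, so `Δν` is nonnegative, nondecreasing away from the root,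
and picks up a positive increment at every edge carrying a positive current.
-/

open Finset

open Relation

theorem wellFounded_of_not_transGen_self {α : Type*} [Finite α] {r : α → α → Prop}
    (h : ∀ a, ¬ TransGen r a a) : WellFounded r :=
  have : IsTrans α (TransGen r) := ⟨fun _ _ _ => TransGen.trans⟩
  have : Std.Irrefl (TransGen r) := ⟨h⟩
  (Finite.wellFounded_of_trans_of_irrefl (TransGen r)).mono fun _ _ => TransGen.single

theorem Anc.le_of_elim_le {V : Type*} {par : V → Option V} {d : V → ℝ}
    (hd : ∀ j, (par j).elim 0 d ≤ d j) {j e : V} (h : Anc par j e) : d e ≤ d j := by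
  induction h with
  | refl => rfl
  | @tail b c _ hbc ih =>
    have := hd b
    rw [show par b = some c from hbc] at this
    exact this.trans ih

namespace Acyclic

variable {V : Type*} {par : V → Option V}

theorem wellFounded_isParent [Finite V] (hacyc : Acyclic par) : WellFounded (IsParent par) :=
  wellFounded_of_not_transGen_self hacyc

theorem wellFounded_swap_isParent [Finite V] (hacyc : Acyclic par) :
    WellFounded (Function.swap (IsParent par)) :=
  wellFounded_of_not_transGen_self fun a ha => hacyc a (transGen_swap.1 ha)

theorem le_of_eq_sum_childrenOf_add [Fintype V] (hacyc : Acyclic par) {f g : V → ℝ}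
    (hg : ∀ j, 0 ≤ g j) (hf : ∀ j, f j = ∑ k ∈ childrenOf par j, f k + g j) (j : V) :
    g j ≤ f j := by
  classical
  induction j using hacyc.wellFounded_isParent.induction with
  | _ j ih =>
    have hchildren : 0 ≤ ∑ k ∈ childrenOf par j, f k := by
      refine sum_nonneg fun k hk => (hg k).trans (ih k ?_)
      simpa [childrenOf, IsParent] using hk
    linarith [hf j]

theorem nonneg_of_elim_le [Finite V] (hacyc : Acyclic par) {d : V → ℝ}
    (hd : ∀ j, (par j).elim 0 d ≤ d j) (j : V) : 0 ≤ d j := by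
  induction j using hacyc.wellFounded_swap_isParent.induction with
  | _ j ih =>
    refine le_trans ?_ (hd j)
    cases hj : par j with
    | none => rfl
    | some i => exact ih i hj

theorem le_of_anc [Finite V] (hacyc : Acyclic par) {c d : V → ℝ} (hc : ∀ j, 0 ≤ c j)
    (hd : ∀ j, (par j).elim 0 d + c j ≤ d j) {j e : V} (h : Anc par j e) : c e ≤ d j := by
  have hd' : ∀ j, (par j).elim 0 d ≤ d j := fun j => by linarith [hd j, hc j]
  have hparent : 0 ≤ (par e).elim 0 d := by
    cases par e with
    | none => rfl
    | some i => exact hacyc.nonneg_of_elim_le hd' i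
  calc c e ≤ (par e).elim 0 d + c e := by linarith
    _ ≤ d e := hd e
    _ ≤ d j := h.le_of_elim_le hd'

end Acyclic

/-- **LinDistFlow underestimates line flows and overestimates nodal voltages.**
Let `(P, Q, ν, ℓ)` be any solution of the nonlinear DistFlow equations (power
conservation with loss terms, and voltage-drop equations) with `ℓ_kl ≥ 0` on every
edge, and let `(P̂, Q̂, ν̂)` be the LinDistFlow solution for the same consumptions
`(pt, qt)` and the same substation voltage `ν0`.  Then `P_ij ≥ P̂_ij` and
`Q_ij ≥ Q̂_ij` on every edge, and `ν_j ≤ ν̂_j` at every node; moreover `ν_j < ν̂_j`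
whenever `ℓ_kl > 0` for some edge `(k,l) ∈ 𝒫_j`. -/
theorem lpf_bounds_npf {V : Type*} [Fintype V] (par : V → Option V)
    (hacyc : Acyclic par) (R X : V → ℝ)
    (hR : ∀ e, 0 < R e) (hX : ∀ e, 0 < X e)
    (pt qt : V → ℝ) (ν0 : ℝ)
    (P Q ν ℓ : V → ℝ)
    (hP : ∀ j, P j = (∑ k ∈ childrenOf par j, P k) + pt j + R j * ℓ j)
    (hQ : ∀ j, Q j = (∑ k ∈ childrenOf par j, Q k) + qt j + X j * ℓ j)
    (hV : ∀ j, ν j = (par j).elim ν0 ν - 2 * (R j * P j + X j * Q j)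
        + (R j ^ 2 + X j ^ 2) * ℓ j)
    (hℓ : ∀ e, 0 ≤ ℓ e)
    (Phat Qhat νhat : V → ℝ)
    (hlpf : IsLPF par R X pt qt ν0 Phat Qhat νhat) :
    (∀ j, Phat j ≤ P j ∧ Qhat j ≤ Q j ∧ ν j ≤ νhat j) ∧
    (∀ j, (∃ e, Anc par j e ∧ 0 < ℓ e) → ν j < νhat j) := by
  obtain ⟨hPhat, hQhat, hνhat⟩ := hlpf
  have hRℓ : ∀ j, 0 ≤ R j * ℓ j := fun j => mul_nonneg (hR j).le (hℓ j)
  have hXℓ : ∀ j, 0 ≤ X j * ℓ j := fun j => mul_nonneg (hX j).le (hℓ j)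
  have hΔP : ∀ j, R j * ℓ j ≤ P j - Phat j := hacyc.le_of_eq_sum_childrenOf_add hRℓ
    fun j => by rw [hP j, hPhat j, sum_sub_distrib]; ring
  have hΔQ : ∀ j, X j * ℓ j ≤ Q j - Qhat j := hacyc.le_of_eq_sum_childrenOf_add hXℓ
    fun j => by rw [hQ j, hQhat j, sum_sub_distrib]; ring
  have hloss : ∀ j, 0 ≤ (R j ^ 2 + X j ^ 2) * ℓ j := fun j =>
    mul_nonneg (by positivity) (hℓ j)
  have hΔν : ∀ j, (par j).elim 0 (fun i => νhat i - ν i) + (R j ^ 2 + X j ^ 2) * ℓ j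
      ≤ νhat j - ν j := fun j => by
    have hparent : (par j).elim ν0 νhat - (par j).elim ν0 ν
        = (par j).elim 0 (fun i => νhat i - ν i) := by
      cases par j <;> simp
    have hRP := mul_le_mul_of_nonneg_left (hΔP j) (hR j).le
    have hXQ := mul_le_mul_of_nonneg_left (hΔQ j) (hX j).le
    rw [hνhat j, hV j]
    linarith
  have hgap := hacyc.nonneg_of_elim_le (d := fun i => νhat i - ν i)
    fun j => by linarith [hΔν j, hloss j]
  refine ⟨fun j => ⟨by linarith [hRℓ j, hΔP j], by linarith [hXℓ j, hΔQ j],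
    by linarith [hgap j]⟩, ?_⟩
  rintro j ⟨e, hje, hℓe⟩
  have hpos : 0 < (R e ^ 2 + X e ^ 2) * ℓ e :=
    mul_pos (add_pos_of_pos_of_nonneg (pow_pos (hR e) 2) (sq_nonneg _)) hℓe
  linarith [hacyc.le_of_anc hloss hΔν hje]
end
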